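/- Let V : R → ℂ²⊗R′ be a unitary, |Φ⟩ the EPR state (|00⟩+|11⟩)/√2 on X⊗Y with X,Y qubits, and define the isometry W = (I ⊗ V*)·SWAP·(|Φ⟩ ⊗ V) : R → X⊗Y⊗R, where SWAP acts on X and the qubit output of V. Then for any operator R on R, W* R W = (1/4) Σ_{i=0}^3 (V*(σ_i⊗I)V) R (V*(σ_i⊗I)V), where σ_0,…,σ_3 are the Pauli matrices I, X, Y, Z. -/

import Mathlib

open Matrix Kronecker

/-- The four Pauli matrices `I, X, Y, Z`. -/
noncomputable def pauli : Fin 4 → Matrix (Fin 2) (Fin 2) ℂ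
  | 0 => 1
  | 1 => !![0, 1; 1, 0]
  | 2 => !![0, -Complex.I; Complex.I, 0]
  | 3 => !![1, 0; 0, -1]

/-- The map `|Φ⟩ ⊗ V : R → (X⊗Y) ⊗ (B⊗R′)`, where `|Φ⟩ = (|00⟩+|11⟩)/√2` is the EPR
state on the qubits `X, Y` and `V : R → B⊗R′`. -/
noncomputable def phiTensorV {m : ℕ} (V : Matrix (Fin 2 × Fin m) (Fin (2 * m)) ℂ) :
    Matrix ((Fin 2 × Fin 2) × (Fin 2 × Fin m)) (Fin (2 * m)) ℂ :=
  Matrix.of fun p r =>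
    (if p.1.1 = p.1.2 then (((Real.sqrt 2)⁻¹ : ℝ) : ℂ) else 0) * V p.2 r

/-- The SWAP gate exchanging the qubit `X` with the qubit `B`, acting on
`(X⊗Y) ⊗ (B⊗R′)`. -/
def swapXB {m : ℕ} :
    Matrix ((Fin 2 × Fin 2) × (Fin 2 × Fin m)) ((Fin 2 × Fin 2) × (Fin 2 × Fin m)) ℂ :=
  Matrix.of fun p q =>
    if p.1.1 = q.2.1 ∧ p.1.2 = q.1.2 ∧ p.2.1 = q.1.1 ∧ p.2.2 = q.2.2 then 1 else 0

/- The `(x, y)` block of `W` is `Vᴴ (|y⟩⟨x| ⊗ I) V / √2`, so `Wᴴ (I ⊗ R) W` is half the sum of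
`Vᴴ (|x⟩⟨y| ⊗ I) VRVᴴ (|y⟩⟨x| ⊗ I) V` over the four pairs `(x, y)`. The completeness relation
`∑ᵢ (σᵢ)_{ab} (σᵢ)_{cd} = 2 δ_{ad} δ_{bc}` of the Pauli basis turns this sum into the Pauli twirl
of `VRVᴴ`. For `R = I` each term is `1`, since `σᵢ² = I` and `V` is unitary, so `W` is an isometry. -/

lemma pauli_mul_self (i : Fin 4) : pauli i * pauli i = 1 := by
  fin_cases i <;> simp [pauli, Matrix.one_fin_two]

lemma sum_pauli_apply_mul_pauli_apply (a b c d : Fin 2) :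
    ∑ i, pauli i a b * pauli i c d = if a = d ∧ b = c then 2 else 0 := by
  fin_cases a <;> fin_cases b <;> fin_cases c <;> fin_cases d <;>
    simp [pauli, Fin.sum_univ_four] <;> norm_num

lemma sum_pauli_kronecker_conj {n : Type*} [Fintype n] [DecidableEq n]
    (M : Matrix (Fin 2 × n) (Fin 2 × n) ℂ) :
    ∑ i, (pauli i ⊗ₖ (1 : Matrix n n ℂ)) * M * (pauli i ⊗ₖ (1 : Matrix n n ℂ)) =
      (2 : ℂ) • ∑ x, ∑ y, (single x y (1 : ℂ) ⊗ₖ (1 : Matrix n n ℂ)) * M *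
        (single y x (1 : ℂ) ⊗ₖ (1 : Matrix n n ℂ)) := by
  ext ⟨a, k⟩ ⟨d, k'⟩
  have completeness (b c : Fin 2) : ∑ i, pauli i a b * M (b, k) (c, k') * pauli i c d =
      (if a = d ∧ b = c then 2 else 0) * M (b, k) (c, k') := by
    rw [← sum_pauli_apply_mul_pauli_apply, Finset.sum_mul]
    exact Finset.sum_congr rfl fun i _ => by ring
  simp only [Matrix.sum_apply, Matrix.mul_apply, kroneckerMap_apply, Matrix.one_apply, mul_ite,
    mul_one, mul_zero, ite_mul, zero_mul, Fintype.sum_prod_type, Finset.sum_ite_eq,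
    Finset.mem_univ, ↓reduceIte, Fin.sum_univ_two, add_mul, Finset.sum_ite_eq',
    Finset.sum_add_distrib, completeness, Matrix.smul_apply, Matrix.add_apply, single_apply,
    smul_eq_mul]
  fin_cases a <;> fin_cases d <;> simp <;> ring

lemma conjTranspose_mul_one_kronecker_mul {α ι κ n : Type*} [Semiring α] [StarRing α]
    [Fintype ι] [DecidableEq ι] [Fintype κ] (W : Matrix (ι × κ) n α) (R : Matrix κ κ α) :
    Wᴴ * ((1 : Matrix ι ι α) ⊗ₖ R) * W =
      ∑ p, (W.submatrix (Prod.mk p) id)ᴴ * R * W.submatrix (Prod.mk p) id := by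
  ext r r'
  simp [Matrix.sum_apply, Matrix.mul_apply, Fintype.sum_prod_type, Matrix.one_apply, ite_mul,
    Finset.sum_mul]

lemma conj_mul_conj_of_mul_self_eq_one {α ι κ : Type*} [CommSemiring α] [StarRing α]
    [Fintype ι] [DecidableEq ι] [Fintype κ] [DecidableEq κ] {V : Matrix ι κ α}
    (hV1 : Vᴴ * V = 1) (hV2 : V * Vᴴ = 1) {A : Matrix ι ι α} (hA : A * A = 1) :
    (Vᴴ * A * V) * (Vᴴ * A * V) = 1 :=
  calc (Vᴴ * A * V) * (Vᴴ * A * V) = Vᴴ * A * (V * Vᴴ) * A * V := by simp only [Matrix.mul_assoc]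
    _ = 1 := by rw [hV2, Matrix.mul_one, Matrix.mul_assoc Vᴴ, hA, Matrix.mul_one, hV1]

section Teleportation

variable {m : ℕ} (V : Matrix (Fin 2 × Fin m) (Fin (2 * m)) ℂ)

noncomputable def teleportIsometry : Matrix ((Fin 2 × Fin 2) × Fin (2 * m)) (Fin (2 * m)) ℂ :=
  ((1 : Matrix (Fin 2 × Fin 2) (Fin 2 × Fin 2) ℂ) ⊗ₖ Vᴴ) * swapXB (m := m) * phiTensorV V

lemma teleportIsometry_submatrix (x y : Fin 2) :
    (teleportIsometry V).submatrix (Prod.mk (x, y)) id =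
      (((Real.sqrt 2)⁻¹ : ℝ) : ℂ) •
        (Vᴴ * (single y x (1 : ℂ) ⊗ₖ (1 : Matrix (Fin m) (Fin m) ℂ)) * V) := by
  ext s r
  simp only [teleportIsometry, swapXB, phiTensorV, submatrix_apply, id_eq, Matrix.mul_apply,
    kroneckerMap_apply, Matrix.one_apply, conjTranspose_apply, of_apply, ite_mul, mul_ite,
    one_mul, mul_one, zero_mul, mul_zero, Fintype.sum_prod_type, Fin.sum_univ_two, Prod.mk.injEq,
    Finset.sum_ite_irrel, Finset.sum_const_zero, Finset.sum_ite_eq, Finset.sum_ite_eq',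
    Finset.mem_univ, ↓reduceIte, Matrix.smul_apply, single_apply, smul_eq_mul]
  fin_cases x <;> fin_cases y <;> simp [Finset.mul_sum, mul_left_comm]

lemma teleportIsometry_submatrix_conj (x y : Fin 2) (R : Matrix (Fin (2 * m)) (Fin (2 * m)) ℂ) :
    ((teleportIsometry V).submatrix (Prod.mk (x, y)) id)ᴴ * R *
        (teleportIsometry V).submatrix (Prod.mk (x, y)) id =
      (2 : ℂ)⁻¹ • (Vᴴ * ((single x y (1 : ℂ) ⊗ₖ (1 : Matrix (Fin m) (Fin m) ℂ)) *
        (V * R * Vᴴ) * (single y x (1 : ℂ) ⊗ₖ (1 : Matrix (Fin m) (Fin m) ℂ))) * V) := by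
  have hnorm : (((Real.sqrt 2)⁻¹ : ℝ) : ℂ) * star (((Real.sqrt 2)⁻¹ : ℝ) : ℂ) = 2⁻¹ := by
    rw [Complex.star_def, Complex.conj_ofReal, ← Complex.ofReal_mul, ← mul_inv,
      Real.mul_self_sqrt zero_le_two]
    norm_num
  simp only [teleportIsometry_submatrix, conjTranspose_smul, conjTranspose_mul,
    conjTranspose_conjTranspose, conjTranspose_kronecker, conjTranspose_single, conjTranspose_one,
    star_one, Matrix.smul_mul, Matrix.mul_smul, smul_smul, hnorm, Matrix.mul_assoc]

lemma conjTranspose_teleportIsometry_mul_one_kronecker_mul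
    (R : Matrix (Fin (2 * m)) (Fin (2 * m)) ℂ) :
    (teleportIsometry V)ᴴ * ((1 : Matrix (Fin 2 × Fin 2) (Fin 2 × Fin 2) ℂ) ⊗ₖ R) *
        teleportIsometry V =
      (4 : ℂ)⁻¹ • ∑ i : Fin 4,
        (Vᴴ * (pauli i ⊗ₖ (1 : Matrix (Fin m) (Fin m) ℂ)) * V) * R *
          (Vᴴ * (pauli i ⊗ₖ (1 : Matrix (Fin m) (Fin m) ℂ)) * V) :=
  calc _ = (2 : ℂ)⁻¹ • (Vᴴ * (∑ x, ∑ y, (single x y (1 : ℂ) ⊗ₖ (1 : Matrix (Fin m) (Fin m) ℂ)) *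
          (V * R * Vᴴ) * (single y x (1 : ℂ) ⊗ₖ (1 : Matrix (Fin m) (Fin m) ℂ))) * V) := by
        rw [conjTranspose_mul_one_kronecker_mul, Fintype.sum_prod_type]
        simp only [teleportIsometry_submatrix_conj, Matrix.mul_sum, Matrix.sum_mul,
          Finset.smul_sum]
    _ = (4 : ℂ)⁻¹ • (Vᴴ * (∑ i, (pauli i ⊗ₖ (1 : Matrix (Fin m) (Fin m) ℂ)) * (V * R * Vᴴ) *
          (pauli i ⊗ₖ (1 : Matrix (Fin m) (Fin m) ℂ))) * V) := by
        rw [sum_pauli_kronecker_conj, Matrix.mul_smul, Matrix.smul_mul, smul_smul]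
        norm_num
    _ = _ := by simp only [Matrix.mul_sum, Matrix.sum_mul, Matrix.mul_assoc]

lemma conjTranspose_teleportIsometry_mul_self (hV1 : Vᴴ * V = 1) (hV2 : V * Vᴴ = 1) :
    (teleportIsometry V)ᴴ * teleportIsometry V = 1 := by
  have pauli_conj_sq (i : Fin 4) :=
    conj_mul_conj_of_mul_self_eq_one hV1 hV2 (A := pauli i ⊗ₖ (1 : Matrix (Fin m) (Fin m) ℂ))
      (by rw [← mul_kronecker_mul, pauli_mul_self, Matrix.mul_one, one_kronecker_one])
  rw [← Matrix.mul_one (teleportIsometry V)ᴴ, ← one_kronecker_one,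
    conjTranspose_teleportIsometry_mul_one_kronecker_mul]
  simp only [Matrix.mul_one, pauli_conj_sq, Finset.sum_const, Finset.card_univ, Fintype.card_fin]
  rw [← Nat.cast_smul_eq_nsmul ℂ, smul_smul]
  norm_num

end Teleportation

/-- For a unitary `V : R → ℂ²⊗R′`, the isometry `W = (I⊗V*)·SWAP·(|Φ⟩⊗V)` satisfies
`W*(I⊗R)W = (1/4)∑ᵢ (V*(σᵢ⊗I)V) R (V*(σᵢ⊗I)V)` for every operator `R` on `R`. -/
theorem teleport_depolarize {m : ℕ} (V : Matrix (Fin 2 × Fin m) (Fin (2 * m)) ℂ)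
    (hV1 : Vᴴ * V = 1) (hV2 : V * Vᴴ = 1) :
    ∀ W : Matrix ((Fin 2 × Fin 2) × Fin (2 * m)) (Fin (2 * m)) ℂ,
      W = ((1 : Matrix (Fin 2 × Fin 2) (Fin 2 × Fin 2) ℂ) ⊗ₖ Vᴴ) * (swapXB (m := m)) * phiTensorV V →
      Wᴴ * W = 1 ∧
      ∀ R : Matrix (Fin (2 * m)) (Fin (2 * m)) ℂ,
        Wᴴ * ((1 : Matrix (Fin 2 × Fin 2) (Fin 2 × Fin 2) ℂ) ⊗ₖ R) * W =
          (4 : ℂ)⁻¹ • ∑ i : Fin 4,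
            (Vᴴ * (pauli i ⊗ₖ (1 : Matrix (Fin m) (Fin m) ℂ)) * V) * R *
              (Vᴴ * (pauli i ⊗ₖ (1 : Matrix (Fin m) (Fin m) ℂ)) * V) := by
  rintro W rfl
  exact ⟨conjTranspose_teleportIsometry_mul_self V hV1 hV2,
    conjTranspose_teleportIsometry_mul_one_kronecker_mul V⟩
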